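/- Let F, f̃ : ℝ^d → ℝ be twice differentiable convex functions and let λ, μ > 0. Suppose ∇²F(x) ⪰ λ·I_d for all x in a convex set D, and ‖∇²f̃(x) − ∇²F(x)‖_op ≤ μ for all x ∈ D. Define the preconditioner φ(x) = f̃(x) + (μ/2)‖x‖². Then for all x ∈ D: ∇²F(x) ⪯ ∇²φ(x) and ∇²φ(x) ⪯ (1 + 2μ/λ)·∇²F(x); consequently the relative smoothness constant L_{F/φ} is at most 1, the relative strong-convexity constant σ_{F/φ} is at least (1 + 2μ/λ)^{−1}, and the relative condition number κ_{F/φ} = L_{F/φ}/σ_{F/φ} is at most 1 + 2μ/λ. -/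

import Mathlib

/-! The quadratic term adds exactly `μ‖v‖²` to the Hessian form of `f̃`, and `∇²f̃` differs from
`∇²F` by at most `μ‖v‖²` on `v`. Hence `∇²F ≤ ∇²φ ≤ ∇²F + 2μ‖v‖²`, and strong convexity
`λ‖v‖² ≤ ∇²F` turns the extra `2μ‖v‖²` into `(2μ/λ)∇²F`. -/

section NormSq

variable {E : Type*} [NormedAddCommGroup E] [InnerProductSpace ℝ E]

theorem iteratedFDeriv_two_norm_sq_apply (x v : E) :
    iteratedFDeriv ℝ 2 (fun z : E => ‖z‖ ^ 2) x ![v, v] = 2 * ‖v‖ ^ 2 := by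
  rw [iteratedFDeriv_two_apply, fderiv_norm_sq, ← FunLike.coe_smul, ContinuousLinearMap.fderiv]
  simp only [smul_apply, Matrix.cons_val_zero, Matrix.cons_val_one, nsmul_eq_mul, Nat.cast_ofNat]
  exact congrArg (2 * ·) (real_inner_self_eq_norm_sq v)

theorem iteratedFDeriv_two_add_half_norm_sq_apply {f : E → ℝ} {x : E}
    (hf : ContDiffAt ℝ 2 f x) (c : ℝ) (v : E) :
    iteratedFDeriv ℝ 2 (fun z => f z + c / 2 * ‖z‖ ^ 2) x ![v, v]
      = iteratedFDeriv ℝ 2 f x ![v, v] + c * ‖v‖ ^ 2 := by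
  have hq : ContDiffAt ℝ 2 (fun z : E => c / 2 * ‖z‖ ^ 2) x :=
    contDiffAt_const.mul (contDiff_norm_sq ℝ).contDiffAt
  rw [fun_iteratedFDeriv_add_apply hf hq, add_apply]
  simp only [← smul_eq_mul (a := c / 2)]
  rw [iteratedFDeriv_const_smul_apply' (contDiff_norm_sq ℝ).contDiffAt, smul_apply,
    iteratedFDeriv_two_norm_sq_apply, smul_eq_mul]
  ring

end NormSq

theorem ContinuousMultilinearMap.norm_apply_two_le {𝕜 E F : Type*} [NontriviallyNormedField 𝕜]
    [NormedAddCommGroup E] [NormedSpace 𝕜 E] [NormedAddCommGroup F] [NormedSpace 𝕜 F]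
    (A : ContinuousMultilinearMap 𝕜 (fun _ : Fin 2 => E) F) (v : E) :
    ‖A ![v, v]‖ ≤ ‖A‖ * ‖v‖ ^ 2 := by
  simpa [Fin.prod_univ_two, sq] using A.le_opNorm ![v, v]

theorem stmt13_general {d : ℕ} (F ft : EuclideanSpace ℝ (Fin d) → ℝ) (lam μ : ℝ)
    (hlam : 0 < lam)
    (D : Set (EuclideanSpace ℝ (Fin d)))
    (hft : ContDiff ℝ 2 ft)
    (hlower : ∀ x ∈ D, ∀ v : EuclideanSpace ℝ (Fin d),
      lam * ‖v‖ ^ 2 ≤ iteratedFDeriv ℝ 2 F x ![v, v])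
    (hclose : ∀ x ∈ D, ‖iteratedFDeriv ℝ 2 ft x - iteratedFDeriv ℝ 2 F x‖ ≤ μ) :
    ∀ x ∈ D, ∀ v : EuclideanSpace ℝ (Fin d),
      iteratedFDeriv ℝ 2 F x ![v, v]
          ≤ iteratedFDeriv ℝ 2 (fun z => ft z + μ / 2 * ‖z‖ ^ 2) x ![v, v]
        ∧ iteratedFDeriv ℝ 2 (fun z => ft z + μ / 2 * ‖z‖ ^ 2) x ![v, v]
          ≤ (1 + 2 * μ / lam) * iteratedFDeriv ℝ 2 F x ![v, v] := by
  intro x hx v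
  set HF := iteratedFDeriv ℝ 2 F x
  set Hft := iteratedFDeriv ℝ 2 ft x
  have hμ : 0 ≤ μ := (norm_nonneg _).trans (hclose x hx)
  have hgap : |Hft ![v, v] - HF ![v, v]| ≤ μ * ‖v‖ ^ 2 := by
    rw [← Real.norm_eq_abs, ← sub_apply]
    exact ((Hft - HF).norm_apply_two_le v).trans
      (mul_le_mul_of_nonneg_right (hclose x hx) (sq_nonneg _))
  obtain ⟨hgap_lower, hgap_upper⟩ := abs_le.mp hgap
  rw [iteratedFDeriv_two_add_half_norm_sq_apply hft.contDiffAt]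
  refine ⟨by linarith, ?_⟩
  calc Hft ![v, v] + μ * ‖v‖ ^ 2
      ≤ HF ![v, v] + 2 * μ / lam * (lam * ‖v‖ ^ 2) := by
        rw [← mul_assoc, div_mul_cancel₀ _ hlam.ne']
        linarith
    _ ≤ HF ![v, v] + 2 * μ / lam * HF ![v, v] := by
        gcongr
        exact hlower x hx v
    _ = (1 + 2 * μ / lam) * HF ![v, v] := by ring

/-- Bounding the relative condition number in statistical preconditioning: let `F, f̃` be twice
differentiable convex functions on `ℝ^d`, `λ, μ > 0`, suppose `∇²F(x) ⪰ λ·I` on a convex set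
`D` and `‖∇²f̃(x) − ∇²F(x)‖_op ≤ μ` on `D`, and let `φ(x) = f̃(x) + (μ/2)‖x‖²`. Then for all
`x ∈ D`, `∇²F(x) ⪯ ∇²φ(x)` and `∇²φ(x) ⪯ (1 + 2μ/λ)·∇²F(x)` (as quadratic forms); i.e. the
relative smoothness constant `L_{F/φ}` is at most `1`, the relative strong convexity constant
`σ_{F/φ}` is at least `(1 + 2μ/λ)⁻¹`, and `κ_{F/φ} ≤ 1 + 2μ/λ`. -/
theorem stmt13 {d : ℕ} (F ft : EuclideanSpace ℝ (Fin d) → ℝ) (lam μ : ℝ)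
    (hlam : 0 < lam) (hμ : 0 < μ)
    (D : Set (EuclideanSpace ℝ (Fin d))) (hD : Convex ℝ D)
    (hF : ContDiff ℝ 2 F) (hft : ContDiff ℝ 2 ft)
    (hFconv : ConvexOn ℝ Set.univ F) (hftconv : ConvexOn ℝ Set.univ ft)
    (hlower : ∀ x ∈ D, ∀ v : EuclideanSpace ℝ (Fin d),
      lam * ‖v‖ ^ 2 ≤ iteratedFDeriv ℝ 2 F x ![v, v])
    (hclose : ∀ x ∈ D, ‖iteratedFDeriv ℝ 2 ft x - iteratedFDeriv ℝ 2 F x‖ ≤ μ) :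
    ∀ x ∈ D, ∀ v : EuclideanSpace ℝ (Fin d),
      iteratedFDeriv ℝ 2 F x ![v, v]
          ≤ iteratedFDeriv ℝ 2 (fun z => ft z + μ / 2 * ‖z‖ ^ 2) x ![v, v]
        ∧ iteratedFDeriv ℝ 2 (fun z => ft z + μ / 2 * ‖z‖ ^ 2) x ![v, v]
          ≤ (1 + 2 * μ / lam) * iteratedFDeriv ℝ 2 F x ![v, v] :=
  stmt13_general F ft lam μ hlam D hft hlower hclose
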